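/- For every integer n ≥ 1, Σ_{k=1}^n ((−1)^{k−1}/k²)·binom(n,k) = (H_n² + H_n^{(2)})/2. -/
import Mathlib

/-- The `n`-th harmonic number `H_n = Σ_{k=1}^n 1/k`. -/
noncomputable def harmonicNum (n : ℕ) : ℝ := ∑ k ∈ Finset.Icc 1 n, (1 : ℝ) / k

/-- The `n`-th second-order harmonic number `H_n^{(2)} = Σ_{k=1}^n 1/k²`. -/
noncomputable def harmonicNum2 (n : ℕ) : ℝ := ∑ k ∈ Finset.Icc 1 n, (1 : ℝ) / (k : ℝ) ^ 2

lemma harmonicNum_succ (n : ℕ) : harmonicNum (n+1) = harmonicNum n + 1/(n+1) := by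
  unfold harmonicNum
  rw [Finset.sum_Icc_succ_top (by omega : 1 ≤ n+1)]
  push_cast; ring

lemma harmonicNum2_succ (n : ℕ) : harmonicNum2 (n+1) = harmonicNum2 n + 1/((n:ℝ)+1)^2 := by
  unfold harmonicNum2
  rw [Finset.sum_Icc_succ_top (by omega : 1 ≤ n+1)]
  push_cast; ring

lemma choose_div_real (n j : ℕ) :
    (n.choose j : ℝ) / (j+1) = ((n+1).choose (j+1) : ℝ) / (n+1) := by
  have h := Nat.add_one_mul_choose_eq n j
  have h' : ((n+1) * n.choose j : ℝ) = ((n+1).choose (j+1) : ℝ) * (j+1) := by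
    exact_mod_cast congrArg (Nat.cast : ℕ → ℝ) h
  rw [div_eq_div_iff (by positivity) (by positivity)]
  linarith [h']

lemma alt_sum_choose (n : ℕ) :
    ∑ j ∈ Finset.range (n+1), (-1:ℝ)^j * ((n+1).choose (j+1) : ℝ) = 1 := by
  have h := Int.alternating_sum_range_choose (n := n+1)
  simp only [Nat.succ_ne_zero, if_false] at h
  have h2 := Finset.sum_range_succ' (fun i => (-1:ℤ)^i * ((n+1).choose i : ℤ)) (n+1)
  rw [h] at h2
  simp only [pow_zero, one_mul, Nat.choose_zero_right, Nat.cast_one] at h2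
  have h3 : ∑ j ∈ Finset.range (n+1), (-1:ℤ)^j * ((n+1).choose (j+1) : ℤ) = 1 := by
    have : ∑ j ∈ Finset.range (n+1), (-1:ℤ)^(j+1) * ((n+1).choose (j+1) : ℤ) = -1 := by
      linarith [h2]
    calc ∑ j ∈ Finset.range (n+1), (-1:ℤ)^j * ((n+1).choose (j+1) : ℤ)
        = -∑ j ∈ Finset.range (n+1), (-1:ℤ)^(j+1) * ((n+1).choose (j+1) : ℤ) := by
          rw [← Finset.sum_neg_distrib]
          apply Finset.sum_congr rfl
          intro j _; ring
      _ = 1 := by rw [this]; ring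
  exact_mod_cast h3

lemma altH (n : ℕ) (hn : 1 ≤ n) :
    ∑ k ∈ Finset.Icc 1 n, ((-1:ℝ)^(k-1) / k) * (n.choose k : ℝ) = harmonicNum n := by
  induction n, hn using Nat.le_induction with
  | base => simp [harmonicNum]
  | succ n hn ih =>
    have hsplit : ∀ k ∈ Finset.Icc 1 (n+1),
        ((-1:ℝ)^(k-1) / k) * ((n+1).choose k : ℝ)
          = ((-1:ℝ)^(k-1) / k) * (n.choose k : ℝ)
            + ((-1:ℝ)^(k-1) / k) * (n.choose (k-1) : ℝ) := by
      intro k hk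
      simp only [Finset.mem_Icc] at hk
      obtain ⟨h1, h2⟩ := hk
      obtain ⟨j, rfl⟩ := Nat.exists_eq_add_of_le h1
      rw [Nat.add_comm 1 j, Nat.choose_succ_succ' ]
      push_cast; ring
    rw [Finset.sum_congr rfl hsplit, Finset.sum_add_distrib]
    have hA : ∑ k ∈ Finset.Icc 1 (n+1), ((-1:ℝ)^(k-1) / k) * (n.choose k : ℝ)
        = harmonicNum n := by
      rw [Finset.sum_Icc_succ_top (by omega : 1 ≤ n+1), Nat.choose_succ_self]
      simp [ih]
    have hB : ∑ k ∈ Finset.Icc 1 (n+1), ((-1:ℝ)^(k-1) / k) * (n.choose (k-1) : ℝ)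
        = 1/((n:ℝ)+1) := by
      rw [← Finset.Ico_add_one_right_eq_Icc, Finset.sum_Ico_eq_sum_range]
      norm_num
      have key : ∀ j ∈ Finset.range (n+1),
          (-1:ℝ)^j / (1+(j:ℝ)) * (n.choose j : ℝ)
            = (1/((n:ℝ)+1)) * ((-1:ℝ)^j * ((n+1).choose (j+1) : ℝ)) := by
        intro j _
        have hc := choose_div_real n j
        calc (-1:ℝ)^j / (1+(j:ℝ)) * (n.choose j : ℝ)
            = (-1:ℝ)^j * ((n.choose j : ℝ)/((j:ℝ)+1)) := by ring
          _ = (-1:ℝ)^j * (((n+1).choose (j+1) : ℝ)/((n:ℝ)+1)) := by rw [hc]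
          _ = (1/((n:ℝ)+1)) * ((-1:ℝ)^j * ((n+1).choose (j+1) : ℝ)) := by ring
      rw [Finset.sum_congr rfl key, ← Finset.mul_sum, alt_sum_choose, mul_one,
        one_div]
    rw [hA, hB, harmonicNum_succ]

/-- For every integer `n ≥ 1`,
`Σ_{k=1}^n ((−1)^{k−1}/k²)·binom(n,k) = (H_n² + H_n^{(2)})/2`. -/
theorem sum_alt_binom_div_sq_eq (n : ℕ) (hn : 1 ≤ n) :
    ∑ k ∈ Finset.Icc 1 n, ((-1 : ℝ) ^ (k - 1) / (k : ℝ) ^ 2) * (n.choose k : ℝ)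
      = (harmonicNum n ^ 2 + harmonicNum2 n) / 2 := by
  induction n, hn using Nat.le_induction with
  | base => norm_num [harmonicNum, harmonicNum2]
  | succ n hn ih =>
    have hsplit : ∀ k ∈ Finset.Icc 1 (n+1),
        ((-1:ℝ)^(k-1) / (k:ℝ)^2) * ((n+1).choose k : ℝ)
          = ((-1:ℝ)^(k-1) / (k:ℝ)^2) * (n.choose k : ℝ)
            + ((-1:ℝ)^(k-1) / (k:ℝ)^2) * (n.choose (k-1) : ℝ) := by
      intro k hk
      simp only [Finset.mem_Icc] at hk
      obtain ⟨h1, h2⟩ := hk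
      obtain ⟨j, rfl⟩ := Nat.exists_eq_add_of_le h1
      rw [Nat.add_comm 1 j, Nat.choose_succ_succ']
      push_cast; ring
    rw [Finset.sum_congr rfl hsplit, Finset.sum_add_distrib]
    have hA : ∑ k ∈ Finset.Icc 1 (n+1), ((-1:ℝ)^(k-1) / (k:ℝ)^2) * (n.choose k : ℝ)
        = (harmonicNum n ^ 2 + harmonicNum2 n) / 2 := by
      rw [Finset.sum_Icc_succ_top (by omega : 1 ≤ n+1), Nat.choose_succ_self]
      simp [ih]
    have hB : ∑ k ∈ Finset.Icc 1 (n+1), ((-1:ℝ)^(k-1) / (k:ℝ)^2) * (n.choose (k-1) : ℝ)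
        = harmonicNum (n+1) / ((n:ℝ)+1) := by
      rw [← Finset.Ico_add_one_right_eq_Icc, Finset.sum_Ico_eq_sum_range]
      norm_num
      have key : ∀ j ∈ Finset.range (n+1),
          (-1:ℝ)^j / (1+(j:ℝ))^2 * (n.choose j : ℝ)
            = (1/((n:ℝ)+1)) * (((-1:ℝ)^j / ((j:ℝ)+1)) * ((n+1).choose (j+1) : ℝ)) := by
        intro j _
        have hc := choose_div_real n j
        calc (-1:ℝ)^j / (1+(j:ℝ))^2 * (n.choose j : ℝ)
            = ((-1:ℝ)^j / ((j:ℝ)+1)) * ((n.choose j : ℝ)/((j:ℝ)+1)) := by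
              rw [div_mul_eq_mul_div, div_mul_div_comm]
              congr 1
              ring
          _ = ((-1:ℝ)^j / ((j:ℝ)+1)) * (((n+1).choose (j+1) : ℝ)/((n:ℝ)+1)) := by rw [hc]
          _ = (1/((n:ℝ)+1)) * (((-1:ℝ)^j / ((j:ℝ)+1)) * ((n+1).choose (j+1) : ℝ)) := by ring
      rw [Finset.sum_congr rfl key, ← Finset.mul_sum]
      have hT : ∑ j ∈ Finset.range (n+1), ((-1:ℝ)^j / ((j:ℝ)+1)) * ((n+1).choose (j+1) : ℝ)
          = harmonicNum (n+1) := by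
        have := altH (n+1) (by omega)
        rw [← Finset.Ico_add_one_right_eq_Icc, Finset.sum_Ico_eq_sum_range] at this
        norm_num at this
        rw [← this]
        apply Finset.sum_congr rfl
        intro j _
        ring
      rw [hT]; ring
    rw [hA, hB, harmonicNum_succ, harmonicNum2_succ]
    have hn1 : ((n:ℝ)+1) ≠ 0 := by positivity
    field_simp
    ring
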